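/- arXiv:math/0311190 — 3 statements merged into one kernel-verified Lean document; each statement's English description precedes it below -/
import Mathlib

section
/- Let G be a finite Coxeter group realized in Euclidean space V, J ⊆ S a subset satisfying the (−1)-condition with associated involution σ_J and parabolic subgroup G_J. Then the centralizer C_G(σ_J) equals the normalizer N_G(G_J) of the parabolic subgroup G_J. -/
/-!
Since `σ` is `-1` on `V_J` and `1` on `V_Jᗮ`, it is the orthogonal reflection in `V_Jᗮ`, and an
isometry commutes with it iff it stabilizes `V_J`. If `g ∈ G` stabilizes `V_J`, it conjugates each
generator `s_{e_j}` of `G_J` to the reflection in the root `g e_j ∈ R ∩ V_J`, which lies in `G_J`.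
Conversely, if `g` normalizes `G_J` then `g σ g⁻¹`, the reflection in `g V_Jᗮ`, lies in `G_J`;
every element of `G_J` fixes `V_Jᗮ` pointwise, so `V_Jᗮ ⊆ g V_Jᗮ`, and equality holds by dimension.
-/

namespace Submodule

variable {𝕜 E : Type*} [RCLike 𝕜] [NormedAddCommGroup E] [InnerProductSpace 𝕜 E]

theorem reflection_map_eq_conj (g : E ≃ₗᵢ[𝕜] E) (K : Submodule 𝕜 E) [K.HasOrthogonalProjection] :
    reflection (K.map (g.toLinearEquiv : E →ₗ[𝕜] E)) = g * reflection K * g⁻¹ :=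
  reflection_map g K

theorem reflection_inj {K L : Submodule 𝕜 E} [K.HasOrthogonalProjection]
    [L.HasOrthogonalProjection] : reflection K = reflection L ↔ K = L := by
  refine ⟨fun h => ?_, by rintro rfl; rfl⟩
  ext v
  rw [← reflection_eq_self_iff (K := K), ← reflection_eq_self_iff (K := L), h]

theorem commute_reflection_iff (g : E ≃ₗᵢ[𝕜] E) (K : Submodule 𝕜 E) [K.HasOrthogonalProjection] :
    Commute g (reflection K) ↔ K.map (g.toLinearEquiv : E →ₗ[𝕜] E) = K := by
  rw [commute_iff_eq, ← mul_inv_eq_iff_eq_mul, ← reflection_map_eq_conj, reflection_inj]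

theorem map_orthogonal_eq_iff (g : E ≃ₗᵢ[𝕜] E) (K : Submodule 𝕜 E) [K.HasOrthogonalProjection] :
    Kᗮ.map (g.toLinearEquiv : E →ₗ[𝕜] E) = Kᗮ ↔ K.map (g.toLinearEquiv : E →ₗ[𝕜] E) = K := by
  rw [map_orthogonal_equiv]
  refine ⟨fun h => ?_, fun h => by rw [h]⟩
  rw [← orthogonal_orthogonal (K.map _), h, orthogonal_orthogonal]

theorem map_eq_of_le_map [FiniteDimensional 𝕜 E] {g : E ≃ₗᵢ[𝕜] E} {K : Submodule 𝕜 E}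
    (h : K ≤ K.map (g.toLinearEquiv : E →ₗ[𝕜] E)) : K.map (g.toLinearEquiv : E →ₗ[𝕜] E) = K :=
  (eq_of_le_of_finrank_eq h (LinearEquiv.finrank_map_eq _ K).symm).symm

theorem eq_reflection_orthogonal {K : Submodule 𝕜 E} [K.HasOrthogonalProjection] {σ : E ≃ₗᵢ[𝕜] E}
    (hneg : ∀ v ∈ K, σ v = -v) (hfix : ∀ v ∈ Kᗮ, σ v = v) : σ = reflection Kᗮ := by
  ext v
  obtain ⟨a, ha, b, hb, rfl⟩ := K.exists_add_mem_mem_orthogonal v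
  rw [map_add, map_add, hneg a ha, hfix b hb,
    reflection_mem_subspace_orthogonal_precomplement_eq_neg ha, reflection_mem_subspace_eq_self hb]

theorem conj_reflection_orthogonal_singleton (g : E ≃ₗᵢ[𝕜] E) (α : E) :
    g * reflection (𝕜 ∙ α)ᗮ * g⁻¹ = reflection (𝕜 ∙ g α)ᗮ := by
  have h : (𝕜 ∙ α)ᗮ.map (g.toLinearEquiv : E →ₗ[𝕜] E) = (𝕜 ∙ g α)ᗮ := by
    rw [map_orthogonal_equiv, map_span, Set.image_singleton]; rfl
  rw [← reflection_map_eq_conj]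
  simp_rw [h]

theorem apply_eq_self_of_mem_closure_reflections {ι : Type*} {J : Set ι} {e : ι → E}
    {h : E ≃ₗᵢ[𝕜] E} (hh : h ∈ Subgroup.closure {r | ∃ j ∈ J, r = reflection (𝕜 ∙ e j)ᗮ})
    {v : E} (hv : v ∈ (span 𝕜 (e '' J))ᗮ) : h v = v := by
  induction hh using Subgroup.closure_induction with
  | mem r hr =>
    obtain ⟨j, hj, rfl⟩ := hr
    refine reflection_mem_subspace_eq_self (orthogonal_le ?_ hv)
    exact (span_singleton_le_iff_mem _ _).2 (subset_span ⟨j, hj, rfl⟩)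
  | one => rfl
  | mul x y _ _ hx hy => simp [hx, hy]
  | inv x _ hx => simp [LinearIsometryEquiv.symm_apply_eq, hx]

end Submodule

theorem Subgroup.conj_mem_closure {G : Type*} [Group G] {s : Set G} {g : G}
    (hg : ∀ r ∈ s, g * r * g⁻¹ ∈ closure s) {h : G} (hh : h ∈ closure s) :
    g * h * g⁻¹ ∈ closure s :=
  (closure_le ((closure s).comap (MulAut.conj g).toMonoidHom)).2 hg hh

open Submodule

theorem stmt8_general {V : Type*} [NormedAddCommGroup V] [InnerProductSpace ℝ V]
    [FiniteDimensional ℝ V] {ι : Type*} (J : Set ι) (e : ι → V)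
    (R : Finset V)
    (G : Subgroup (V ≃ₗᵢ[ℝ] V))
    (hstab : ∀ g ∈ G, ∀ α ∈ R, g α ∈ R)
    (heR : ∀ j ∈ J, e j ∈ R)
    (GJ : Subgroup (V ≃ₗᵢ[ℝ] V))
    (hGJ : GJ = Subgroup.closure {g : V ≃ₗᵢ[ℝ] V | ∃ j ∈ J, g = Submodule.reflection (ℝ ∙ e j)ᗮ})
    (VJ : Submodule ℝ V) (hVJ : VJ = Submodule.span ℝ (e '' J))
    (hRJ : ∀ α ∈ R, α ∈ VJ → Submodule.reflection (ℝ ∙ α)ᗮ ∈ GJ)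
    (σ : V ≃ₗᵢ[ℝ] V) (hσJ : σ ∈ GJ)
    (hminus : ∀ v ∈ VJ, σ v = -v) (hplus : ∀ v ∈ VJᗮ, σ v = v) :
    {g : V ≃ₗᵢ[ℝ] V | g ∈ G ∧ Commute g σ} =
      {g : V ≃ₗᵢ[ℝ] V | g ∈ G ∧ ∀ h : V ≃ₗᵢ[ℝ] V, h ∈ GJ ↔ g * h * g⁻¹ ∈ GJ} := by
  have hσ : σ = reflection VJᗮ := eq_reflection_orthogonal hminus hplus
  have hcomm (g : V ≃ₗᵢ[ℝ] V) : Commute g σ ↔ VJ.map (g.toLinearEquiv : V →ₗ[ℝ] V) = VJ := by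
    rw [hσ, commute_reflection_iff, map_orthogonal_eq_iff]
  have hfix {h : V ≃ₗᵢ[ℝ] V} (hh : h ∈ GJ) {v : V} (hv : v ∈ VJᗮ) : h v = v :=
    apply_eq_self_of_mem_closure_reflections (hGJ ▸ hh) (hVJ ▸ hv)
  have hcentralizer :
      G ⊓ Subgroup.centralizer {σ} ≤ Subgroup.normalizer (GJ : Set (V ≃ₗᵢ[ℝ] V)) := by
    refine Subgroup.le_normalizer_iff.2 fun g ⟨hg, hgσ⟩ h hh => ?_
    have hmap := (hcomm g).1 (Subgroup.mem_centralizer_singleton_iff.1 hgσ)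
    subst hGJ
    refine Subgroup.conj_mem_closure ?_ hh
    rintro r ⟨j, hj, rfl⟩
    have hej : e j ∈ VJ := hVJ ▸ subset_span ⟨j, hj, rfl⟩
    rw [conj_reflection_orthogonal_singleton]
    exact hRJ _ (hstab g hg _ (heR j hj)) (hmap ▸ mem_map_of_mem hej)
  ext g
  simp only [Set.mem_ofPred_eq, ← Subgroup.mem_normalizer_iff]
  refine and_congr_right fun hg =>
    ⟨fun hgσ => hcentralizer ⟨hg, Subgroup.mem_centralizer_singleton_iff.2 hgσ⟩, fun hN => ?_⟩
  have hconj : g * σ * g⁻¹ ∈ GJ := (Subgroup.mem_normalizer_iff.1 hN σ).1 hσJ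
  rw [hσ, ← reflection_map_eq_conj] at hconj
  rw [hσ, commute_reflection_iff]
  exact map_eq_of_le_map fun v hv => (reflection_eq_self_iff v).1 (hfix hconj hv)

/-- for a finite Coxeter group `G` realised in Euclidean space `V`
with root system `R`, and a subset `J` of simple roots satisfying the
`(−1)`-condition with associated involution `σ = σ_J` (acting as `−Id` on `V_J`
and as `Id` on `V_Jᗮ`), the centraliser of `σ_J` in `G` coincides with the
normaliser of the parabolic subgroup `G_J` in `G`.
Key input (hypothesis `hRJ`): the roots of `G_J` are exactly `R ∩ V_J`. -/
theorem stmt8 {V : Type*} [NormedAddCommGroup V] [InnerProductSpace ℝ V]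
    [FiniteDimensional ℝ V] {ι : Type*} (J : Set ι) (e : ι → V)
    (R : Finset V) (hR0 : ∀ α ∈ R, α ≠ 0)
    (G : Subgroup (V ≃ₗᵢ[ℝ] V)) [Finite G]
    (hGgen : G = Subgroup.closure {g : V ≃ₗᵢ[ℝ] V | ∃ α ∈ R, g = Submodule.reflection (ℝ ∙ α)ᗮ})
    (hstab : ∀ g ∈ G, ∀ α ∈ R, g α ∈ R)
    (heR : ∀ j ∈ J, e j ∈ R)
    (GJ : Subgroup (V ≃ₗᵢ[ℝ] V))
    (hGJ : GJ = Subgroup.closure {g : V ≃ₗᵢ[ℝ] V | ∃ j ∈ J, g = Submodule.reflection (ℝ ∙ e j)ᗮ})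
    (hGJG : GJ ≤ G)
    (VJ : Submodule ℝ V) (hVJ : VJ = Submodule.span ℝ (e '' J))
    (hRJ : ∀ α ∈ R, α ∈ VJ → Submodule.reflection (ℝ ∙ α)ᗮ ∈ GJ)
    (σ : V ≃ₗᵢ[ℝ] V) (hσJ : σ ∈ GJ)
    (hminus : ∀ v ∈ VJ, σ v = -v) (hplus : ∀ v ∈ VJᗮ, σ v = v) :
    {g : V ≃ₗᵢ[ℝ] V | g ∈ G ∧ Commute g σ} =
      {g : V ≃ₗᵢ[ℝ] V | g ∈ G ∧ ∀ h : V ≃ₗᵢ[ℝ] V, h ∈ GJ ↔ g * h * g⁻¹ ∈ GJ} :=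
  stmt8_general J e R G hstab heR GJ hGJ VJ hVJ hRJ σ hσJ hminus hplus
end

section
/- Let σ be an involution in the symmetric group S_n, and consider its action on the configuration space M_n of n distinct points in ℂ composed with complex conjugation; call this map σ̄. If σ is a product of m ≥ 1 disjoint transpositions, then the fixed point set of σ̄ in M_n is homeomorphic to a disjoint union of finitely many copies of M_m × ℝ^{n−2m}, where M_m is the configuration space of m distinct points of ℂ. -/
/-- The configuration space `M_N` of `N` distinct (labelled) points in `ℂ`. -/
abbrev ConfigSpace (N : ℕ) : Type := {z : Fin N → ℂ // Function.Injective z}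

/-!
Relabelling the points, `σ` becomes the involution of `(Fin m ⊕ Fin m) ⊕ Fin (n - 2m)` that swaps
the two copies of `Fin m`. A fixed configuration is then the same as `m` points `w` such that `w`
and `w̄` together are `2m` distinct points, plus `n - 2m` distinct real numbers. The signs of the
imaginary parts of `w` and the fold `z ↦ re z + i log |im z|` identify the first datum with
`(Fin m → Bool) × M_m`. The permutation sorting the real numbers identifies the second with
`Fin (n - 2m)! × {strictly increasing tuples}`, and a strictly increasing tuple `y` is coordinatised
by `y 0` and the numbers `log (y (i + 1) - y 0)`, recursively.
-/

open Function Filter Topology ComplexConjugate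
open scoped Nat

section

variable {X Y K : Type*} [TopologicalSpace X] [TopologicalSpace Y]

@[fun_prop]
theorem Continuous.subtype_val_apply {ι : Type*} {p : (ι → Y) → Prop} {f : X → Subtype p}
    (hf : Continuous f) (i : ι) : Continuous fun x => (f x).1 i :=
  (continuous_apply i).comp (continuous_subtype_val.comp hf)

theorem IsLocallyConstant.continuous_piecewise {f : X → K} (hf : IsLocallyConstant f)
    {g : K → X → Y} (hg : ∀ k, Continuous (g k)) : Continuous fun x => g (f x) x :=
  continuous_iff_continuousAt.2 fun x => (hg (f x)).continuousAt.congr <| by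
    filter_upwards [(IsLocallyConstant.iff_eventually_eq f).1 hf x] with y hy
    rw [hy]

def Homeomorph.prodOfIsLocallyConstant [TopologicalSpace K] [DiscreteTopology K]
    (f : X → K) (g : X → Y) (h : K → Y → X) (hf : IsLocallyConstant f) (hg : Continuous g)
    (hh : ∀ k, Continuous (h k)) (h_fg : ∀ x, h (f x) (g x) = x) (f_h : ∀ k y, f (h k y) = k)
    (g_h : ∀ k y, g (h k y) = y) : X ≃ₜ K × Y where
  toFun x := (f x, g x)
  invFun p := h p.1 p.2
  left_inv := h_fg
  right_inv p := Prod.ext (f_h p.1 p.2) (g_h p.1 p.2)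
  continuous_toFun := hf.continuous.prodMk hg
  continuous_invFun := continuous_prod_of_discrete_left.2 hh

end

/-- Identifies `z` with `conj z`; on the upper half plane it is a homeomorphism onto `ℂ`. -/
noncomputable def foldNonreal (z : ℂ) : ℂ := z.re + Real.log |z.im| * Complex.I

noncomputable def unfoldNonreal (b : Bool) (u : ℂ) : ℂ :=
  u.re + (if b then Real.exp u.im else -Real.exp u.im) * Complex.I

@[simp]
theorem foldNonreal_conj (z : ℂ) : foldNonreal (conj z) = foldNonreal z := by
  simp [foldNonreal]

@[simp]
theorem foldNonreal_unfoldNonreal (b : Bool) (u : ℂ) : foldNonreal (unfoldNonreal b u) = u := by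
  cases b <;> simp [foldNonreal, unfoldNonreal, -Complex.ofReal_exp]

@[simp]
theorem im_unfoldNonreal_pos_iff (b : Bool) (u : ℂ) : 0 < (unfoldNonreal b u).im ↔ b := by
  cases b <;> simp [unfoldNonreal, -Complex.ofReal_exp, Real.exp_pos, Real.exp_nonneg]

theorem im_unfoldNonreal_ne_zero (b : Bool) (u : ℂ) : (unfoldNonreal b u).im ≠ 0 := by
  cases b <;> simp [unfoldNonreal, -Complex.ofReal_exp, Real.exp_ne_zero]

theorem unfoldNonreal_foldNonreal {z : ℂ} (hz : z.im ≠ 0) :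
    unfoldNonreal (0 < z.im) (foldNonreal z) = z := by
  rcases hz.lt_or_gt with h | h <;>
    simp [unfoldNonreal, foldNonreal, -Complex.ofReal_exp,
      Real.exp_log_eq_abs hz, h, h.le, abs_of_neg, abs_of_pos, not_lt.2]

theorem eq_or_eq_conj_of_foldNonreal_eq {z w : ℂ} (hz : z.im ≠ 0) (hw : w.im ≠ 0)
    (h : foldNonreal z = foldNonreal w) : z = w ∨ z = conj w := by
  have hre : z.re = w.re := by simpa [foldNonreal] using congrArg Complex.re h
  have habs : |z.im| = |w.im| := Real.log_injOn_pos (abs_pos.2 hz) (abs_pos.2 hw) <| by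
    simpa [foldNonreal] using congrArg Complex.im h
  rcases abs_eq_abs.1 habs with him | him
  · exact .inl (Complex.ext hre him)
  · exact .inr (Complex.ext (by simpa using hre) (by simpa using him))

theorem continuousAt_foldNonreal {z : ℂ} (hz : z.im ≠ 0) : ContinuousAt foldNonreal z := by
  unfold foldNonreal
  fun_prop (disch := simpa using hz)

theorem continuous_unfoldNonreal (b : Bool) : Continuous (unfoldNonreal b) := by
  unfold unfoldNonreal
  cases b <;> simp only [Bool.false_eq_true, if_true, if_false] <;> fun_prop

theorem eventually_im_pos_iff {z : ℂ} (hz : z.im ≠ 0) : ∀ᶠ w in 𝓝 z, 0 < w.im ↔ 0 < z.im := by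
  have him := Complex.continuous_im.continuousAt (x := z)
  rcases hz.lt_or_gt with h | h
  · filter_upwards [him.eventually_lt continuousAt_const h] with w hw
    exact iff_of_false hw.asymm h.asymm
  · filter_upwards [continuousAt_const.eventually_lt him h] with w hw
    exact iff_of_true hw h

/-- The points `z₁, …, z_m` of a fixed configuration `(z₁, z̄₁, …, z_m, z̄_m, x₁, …)`. -/
abbrev ConjDisjointConfig (A : Type*) : Type _ :=
  {w : A → ℂ // Injective w ∧ ∀ a b, w a ≠ conj (w b)}

namespace ConjDisjointConfig

variable {A : Type*}

theorem im_ne_zero (w : ConjDisjointConfig A) (a : A) : (w.1 a).im ≠ 0 :=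
  fun h => w.2.2 a a (Complex.conj_eq_iff_im.2 h).symm

theorem injective_foldNonreal_comp (w : ConjDisjointConfig A) : Injective (foldNonreal ∘ w.1) :=
  fun a b h => (eq_or_eq_conj_of_foldNonreal_eq (w.im_ne_zero a) (w.im_ne_zero b) h).elim
    (fun h => w.2.1 h) (fun h => absurd h (w.2.2 a b))

theorem unfoldNonreal_mem (b : A → Bool) (u : {u : A → ℂ // Injective u}) :
    Injective (fun a => unfoldNonreal (b a) (u.1 a)) ∧
      ∀ a a', unfoldNonreal (b a) (u.1 a) ≠ conj (unfoldNonreal (b a') (u.1 a')) := by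
  refine ⟨fun a a' h => u.2 (by simpa using congrArg foldNonreal h), fun a a' h => ?_⟩
  obtain rfl : a = a' := u.2 (by simpa using congrArg foldNonreal h)
  exact im_unfoldNonreal_ne_zero (b a) (u.1 a) (Complex.conj_eq_iff_im.1 h.symm)

theorem isLocallyConstant_signs [Finite A] :
    IsLocallyConstant fun (w : ConjDisjointConfig A) a => decide (0 < (w.1 a).im) := by
  refine (IsLocallyConstant.iff_eventually_eq _).2 fun w => ?_
  have hcoord (a : A) : Continuous fun w : ConjDisjointConfig A => w.1 a := by fun_prop
  filter_upwards [eventually_all.2 fun a =>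
    (hcoord a).continuousAt.eventually (eventually_im_pos_iff (w.im_ne_zero a))] with w' hw'
  exact funext fun a => decide_eq_decide.2 (hw' a)

noncomputable def signFoldHomeomorph [Finite A] :
    ConjDisjointConfig A ≃ₜ (A → Bool) × {u : A → ℂ // Injective u} :=
  Homeomorph.prodOfIsLocallyConstant
    (fun w a => decide (0 < (w.1 a).im))
    (fun w => ⟨foldNonreal ∘ w.1, w.injective_foldNonreal_comp⟩)
    (fun b u => ⟨fun a => unfoldNonreal (b a) (u.1 a), unfoldNonreal_mem b u⟩)
    isLocallyConstant_signs
    (by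
      refine (continuous_pi fun a => continuous_iff_continuousAt.2 fun w => ?_).subtype_mk _
      exact ContinuousAt.comp (x := w) (continuousAt_foldNonreal (w.im_ne_zero a))
        (by fun_prop : Continuous fun w : ConjDisjointConfig A => w.1 a).continuousAt)
    (fun b => by
      refine Continuous.subtype_mk (continuous_pi fun a => ?_) _
      exact (continuous_unfoldNonreal (b a)).comp (by fun_prop))
    (fun w => Subtype.ext <| funext fun a => unfoldNonreal_foldNonreal (w.im_ne_zero a))
    (fun b u => funext fun a => by simp)
    (fun b u => Subtype.ext <| funext fun a => by simp)

end ConjDisjointConfig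

section

variable {α : Type*} [LinearOrder α] {k : ℕ}

theorem Tuple.sort_eq_of_strictMono_comp {f : Fin k → α} {σ : Equiv.Perm (Fin k)}
    (h : StrictMono (f ∘ σ)) : Tuple.sort f = σ :=
  (Tuple.eq_sort_iff.2 ⟨h.monotone, fun _ _ hij he => absurd he (h hij).ne⟩).symm

theorem Tuple.strictMono_comp_sort {f : Fin k → α} (hf : Injective f) :
    StrictMono (f ∘ Tuple.sort f) :=
  (Tuple.monotone_sort f).strictMono_of_injective (hf.comp (Equiv.injective _))

theorem Tuple.sort_comp_symm {y : Fin k → α} (hy : StrictMono y) (σ : Equiv.Perm (Fin k)) :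
    Tuple.sort (y ∘ σ.symm) = σ :=
  Tuple.sort_eq_of_strictMono_comp (by convert hy using 1; ext; simp)

variable [TopologicalSpace α] [OrderClosedTopology α]

theorem isLocallyConstant_sort_injective :
    IsLocallyConstant fun x : {x : Fin k → α // Injective x} => Tuple.sort x.1 := by
  refine (IsLocallyConstant.iff_eventually_eq _).2 fun x => ?_
  have hx := Tuple.strictMono_comp_sort x.2
  have hcoord (i : Fin k) : ContinuousAt (fun y : {x : Fin k → α // Injective x} => y.1 i) x :=
    (continuous_id.subtype_val_apply i).continuousAt
  have : ∀ᶠ y in 𝓝 x, ∀ i j, i < j → y.1 (Tuple.sort x.1 i) < y.1 (Tuple.sort x.1 j) :=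
    eventually_all.2 fun i => eventually_all.2 fun j => eventually_imp_distrib_left.2 fun hij =>
      (hcoord _).eventually_lt (hcoord _) (hx hij)
  filter_upwards [this] with y hy using Tuple.sort_eq_of_strictMono_comp fun i j hij => hy i j hij

noncomputable def injectiveTupleHomeomorph (k : ℕ) :
    {x : Fin k → α // Injective x} ≃ₜ Fin (k !) × {y : Fin k → α // StrictMono y} :=
  let e : Equiv.Perm (Fin k) ≃ Fin (k !) := Fintype.equivFinOfCardEq (by simp [Fintype.card_perm])
  Homeomorph.prodOfIsLocallyConstant
    (fun x => e (Tuple.sort x.1)) (fun x => ⟨x.1 ∘ Tuple.sort x.1, Tuple.strictMono_comp_sort x.2⟩)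
    (fun p y => ⟨y.1 ∘ (e.symm p).symm, y.2.injective.comp (Equiv.injective _)⟩)
    (isLocallyConstant_sort_injective.comp e)
    ((isLocallyConstant_sort_injective.continuous_piecewise (g := fun σ x => x.1 ∘ σ) fun σ =>
      by fun_prop).subtype_mk _)
    (fun p => by fun_prop)
    (fun x => Subtype.ext <| funext fun i => by simp)
    (fun p y => by simp [Tuple.sort_comp_symm y.2])
    (fun p y => Subtype.ext <| funext fun i => by simp [Tuple.sort_comp_symm y.2])

end

noncomputable def strictMonoConsHomeomorph (k : ℕ) :
    {y : Fin (k + 1) → ℝ // StrictMono y} ≃ₜ ℝ × {t : Fin k → ℝ // StrictMono t} where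
  toFun y := (y.1 0, ⟨fun i => Real.log (y.1 i.succ - y.1 0), fun i j hij =>
    Real.log_lt_log (sub_pos.2 (y.2 i.succ_pos))
      (sub_lt_sub_right (y.2 (Fin.succ_lt_succ_iff.2 hij)) _)⟩)
  invFun p := ⟨Fin.cons p.1 fun i => p.1 + Real.exp (p.2.1 i),
    Fin.strictMono_cons.2 ⟨fun _ => lt_add_of_pos_right _ (Real.exp_pos _),
      (Real.exp_strictMono.comp p.2.2).const_add _⟩⟩
  left_inv y := Subtype.ext <| funext fun i => Fin.cases (by simp) (fun i => by
    simp [Real.exp_log (sub_pos.2 (y.2 i.succ_pos))]) i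
  right_inv p := by simp
  continuous_toFun := by
    refine (continuous_apply 0 |>.comp continuous_subtype_val).prodMk
      (Continuous.subtype_mk (continuous_pi fun i => Continuous.log (by fun_prop) fun y => ?_) _)
    exact (sub_pos.2 (y.2 i.succ_pos)).ne'
  continuous_invFun := by
    refine Continuous.subtype_mk ?_ _
    fun_prop

theorem nonempty_strictMono_homeomorph : ∀ k : ℕ,
    Nonempty ({y : Fin k → ℝ // StrictMono y} ≃ₜ (Fin k → ℝ))
  | 0 => ⟨⟨⟨Subtype.val, fun y => ⟨y, fun i => i.elim0⟩, fun _ => rfl, fun _ => rfl⟩,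
      continuous_subtype_val, by fun_prop⟩⟩
  | k + 1 =>
    let ⟨e⟩ := nonempty_strictMono_homeomorph k
    ⟨(strictMonoConsHomeomorph k).trans <| ((Homeomorph.refl ℝ).prodCongr e).trans
      ⟨Fin.consEquiv fun _ => ℝ, by fun_prop, by fun_prop⟩⟩

abbrev ConjFixedConfig (ι : Type*) (σ : ι → ι) : Type _ :=
  {z : {z : ι → ℂ // Injective z} // ∀ i, conj (z.1 (σ i)) = z.1 i}

namespace ConjFixedConfig

variable {ι κ : Type*}

def congr (e : κ ≃ ι) {σ : ι → ι} {τ : κ → κ} (he : ∀ x, σ (e x) = e (τ x)) :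
    ConjFixedConfig ι σ ≃ₜ ConjFixedConfig κ τ where
  toFun z := ⟨⟨z.1.1 ∘ e, z.1.2.comp e.injective⟩, fun x => by simpa [he] using z.2 (e x)⟩
  invFun z := ⟨⟨z.1.1 ∘ e.symm, z.1.2.comp e.symm.injective⟩, fun i => by
    have : e.symm (σ i) = τ (e.symm i) := e.symm_apply_eq.2 (by rw [← he, e.apply_symm_apply])
    simpa [this] using z.2 (e.symm i)⟩
  left_inv z := by ext; simp
  right_inv z := by ext; simp
  continuous_toFun := by fun_prop
  continuous_invFun := by fun_prop

variable {A B : Type*}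

theorem apply_inl_inr (z : ConjFixedConfig ((A ⊕ A) ⊕ B) (Sum.map Sum.swap id)) (a : A) :
    z.1.1 (.inl (.inr a)) = conj (z.1.1 (.inl (.inl a))) := by
  rw [← z.2 (.inl (.inl a)), Complex.conj_conj]
  rfl

theorem im_apply_inr (z : ConjFixedConfig ((A ⊕ A) ⊕ B) (Sum.map Sum.swap id)) (b : B) :
    (z.1.1 (.inr b)).im = 0 :=
  Complex.conj_eq_iff_im.1 (z.2 (.inr b))

variable (A B)

def swapHomeomorph :
    ConjFixedConfig ((A ⊕ A) ⊕ B) (Sum.map Sum.swap id) ≃ₜ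
      ConjDisjointConfig A × {x : B → ℝ // Injective x} where
  toFun z := (⟨fun a => z.1.1 (.inl (.inl a)),
      fun a b h => by simpa using z.1.2 h,
      fun a b => by rw [← apply_inl_inr]; exact z.1.2.ne (by simp)⟩,
    ⟨fun b => (z.1.1 (.inr b)).re, fun b b' h => by
      simpa using z.1.2 (Complex.ext h (by rw [im_apply_inr, im_apply_inr]))⟩)
  invFun p := ⟨⟨Sum.elim (Sum.elim p.1.1 (conj ∘ p.1.1)) fun b => (p.2.1 b : ℂ),
    .sumElim (.sumElim p.1.2.1 ((starRingEnd ℂ).injective.comp p.1.2.1) p.1.2.2)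
      (Complex.ofReal_injective.comp p.2.2) <| by
        rintro (a | a) b h <;> exact p.1.im_ne_zero a (by simpa using congrArg Complex.im h)⟩,
    by rintro ((a | a) | b) <;> simp⟩
  left_inv z := by
    ext ((a | a) | b)
    · rfl
    · exact (apply_inl_inr z a).symm
    · exact Complex.ext rfl (im_apply_inr z b).symm
  right_inv p := by ext <;> simp
  continuous_toFun := by fun_prop
  continuous_invFun := by
    refine Continuous.subtype_mk (Continuous.subtype_mk (continuous_pi ?_) _) _
    rintro ((a | a) | b) <;> simp only [Sum.elim_inl, Sum.elim_inr, comp_apply] <;> fun_prop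

end ConjFixedConfig

section

variable {ι : Type*} [LinearOrder ι] {σ : ι → ι}

noncomputable def Function.Involutive.sumEquiv (hσ : Involutive σ) :
    ({i // i < σ i} ⊕ {i // i < σ i}) ⊕ {i // σ i = i} ≃ ι :=
  Equiv.ofBijective (Sum.elim (Sum.elim Subtype.val (σ ∘ Subtype.val)) Subtype.val) <| by
    refine ⟨.sumElim (.sumElim Subtype.val_injective (hσ.injective.comp Subtype.val_injective)
      fun a b h => ?_) Subtype.val_injective ?_, fun i => ?_⟩
    · have := a.2
      rw [h, comp_apply, hσ] at this
      exact b.2.asymm this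
    · rintro (a | a) c h
      · have h : a.1 = c.1 := h
        exact a.2.ne (by rw [h, c.2] : σ a.1 = a.1).symm
      · have h : σ a.1 = c.1 := h
        exact a.2.ne (hσ.injective (by rw [h, c.2]))
    · rcases lt_trichotomy i (σ i) with h | h | h
      · exact ⟨.inl (.inl ⟨i, h⟩), rfl⟩
      · exact ⟨.inr ⟨i, h.symm⟩, rfl⟩
      · exact ⟨.inl (.inr ⟨σ i, by rwa [hσ]⟩), hσ i⟩

theorem Function.Involutive.apply_sumEquiv (hσ : Involutive σ) (x) :
    σ (hσ.sumEquiv x) = hσ.sumEquiv (Sum.map Sum.swap id x) := by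
  rcases x with (a | a) | c
  · rfl
  · exact hσ a.1
  · exact c.2

end

theorem Equiv.Perm.exists_equiv_sumSwap {n m : ℕ} {σ : Equiv.Perm (Fin n)} (hσ : Involutive σ)
    (hσm : (Finset.univ.filter fun i : Fin n => σ i ≠ i).card = 2 * m) :
    ∃ e : (Fin m ⊕ Fin m) ⊕ Fin (n - 2 * m) ≃ Fin n, ∀ x, σ (e x) = e (Sum.map Sum.swap id x) := by
  have hsum := Fintype.card_congr hσ.sumEquiv
  have hfix := Finset.card_filter_add_card_filter_not (s := Finset.univ) (fun i : Fin n => σ i = i)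
  simp only [Fintype.card_sum, Fintype.card_fin] at hsum
  rw [← Fintype.card_subtype, hσm, Finset.card_univ, Fintype.card_fin] at hfix
  let eR : {i // i < σ i} ≃ Fin m := Fintype.equivFinOfCardEq (by omega)
  let eF : {i // σ i = i} ≃ Fin (n - 2 * m) := Fintype.equivFinOfCardEq (by omega)
  refine ⟨((eR.sumCongr eR).sumCongr eF).symm.trans hσ.sumEquiv, fun x => ?_⟩
  rw [Equiv.trans_apply, hσ.apply_sumEquiv]
  rcases x with (a | a) | c <;> rfl

theorem stmt10_general {n m : ℕ} (σ : Equiv.Perm (Fin n))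
    (hσ2 : σ * σ = 1)
    (hσm : (Finset.univ.filter fun i : Fin n => σ i ≠ i).card = 2 * m) :
    ∃ K : ℕ, 0 < K ∧
      Nonempty (({z : ConfigSpace n // ∀ i, (starRingEnd ℂ) (z.1 (σ i)) = z.1 i}) ≃ₜ
        (Fin K × (ConfigSpace m × (Fin (n - 2 * m) → ℝ)))) := by
  have hσ : Involutive σ := fun i => by simpa using congr($hσ2 i)
  obtain ⟨e, he⟩ := σ.exists_equiv_sumSwap hσ hσm
  obtain ⟨eℝ⟩ := nonempty_strictMono_homeomorph (n - 2 * m)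
  let D := (Fin m → Bool) × Fin (n - 2 * m)!
  refine ⟨Fintype.card D, Fintype.card_pos_iff.2 ⟨(fun _ => true, ⟨0, Nat.factorial_pos _⟩)⟩, ⟨?_⟩⟩
  exact (ConjFixedConfig.congr e he).trans <| (ConjFixedConfig.swapHomeomorph _ _).trans <|
    (ConjDisjointConfig.signFoldHomeomorph.prodCongr <|
      (injectiveTupleHomeomorph _).trans <| (Homeomorph.refl _).prodCongr eℝ).trans <|
    (Homeomorph.prodProdProdComm _ _ _ _).trans <|
    (Fintype.equivFin D).toHomeomorphOfDiscrete.prodCongr (Homeomorph.refl _)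

/-- let `σ ∈ S_n` be a product of `m ≥ 1` disjoint transpositions
(an involution moving exactly `2m` points), and let `σ̄` be its action on the
configuration space `M_n` composed with complex conjugation.  Then the fixed
point set of `σ̄` is homeomorphic to a disjoint union of finitely many copies
of `M_m × ℝ^{n−2m}`. -/
theorem stmt10 {n m : ℕ} (hm : 1 ≤ m) (σ : Equiv.Perm (Fin n))
    (hσ2 : σ * σ = 1)
    (hσm : (Finset.univ.filter fun i : Fin n => σ i ≠ i).card = 2 * m) :
    ∃ K : ℕ, 0 < K ∧
      Nonempty (({z : ConfigSpace n // ∀ i, (starRingEnd ℂ) (z.1 (σ i)) = z.1 i}) ≃ₜ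
        (Fin K × (ConfigSpace m × (Fin (n - 2 * m) → ℝ)))) :=
  stmt10_general σ hσ2 hσm
end

section
/- Let σ be a special involution in a finite Coxeter group G with eigenspace decomposition V = V₁ ⊕ V₂ (V₁ the −1-eigenspace) and associated root subsystems R₁ = R ∩ V₁, R₂ = R ∩ V₂ generating Coxeter subgroups G₁, G₂. Then the fixed point set of the map z ↦ σ(z̄) on M_G has exactly |G₁|·|G₂| connected components, each of which is contractible (an open convex cone). -/
noncomputable section

/-- The `(−1)`-eigenspace of an isometry `σ`. -/
def minusEigenspace {n : ℕ}
    (σ : EuclideanSpace ℝ (Fin n) ≃ₗᵢ[ℝ] EuclideanSpace ℝ (Fin n)) :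
    Submodule ℝ (EuclideanSpace ℝ (Fin n)) :=
  Module.End.eigenspace (σ.toLinearEquiv : EuclideanSpace ℝ (Fin n) →ₗ[ℝ] _) (-1)

/-- The `(+1)`-eigenspace of an isometry `σ`. -/
def plusEigenspace {n : ℕ}
    (σ : EuclideanSpace ℝ (Fin n) ≃ₗᵢ[ℝ] EuclideanSpace ℝ (Fin n)) :
    Submodule ℝ (EuclideanSpace ℝ (Fin n)) :=
  Module.End.eigenspace (σ.toLinearEquiv : EuclideanSpace ℝ (Fin n) →ₗ[ℝ] _) 1

/-- The complexified action of `σ` composed with complex conjugation: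
`σ̄(x + iy) = σ(x) − i σ(y)` for real vectors `x`, `y`. -/
def barAction {n : ℕ}
    (σ : EuclideanSpace ℝ (Fin n) ≃ₗᵢ[ℝ] EuclideanSpace ℝ (Fin n))
    (z : Fin n → ℂ) : Fin n → ℂ := fun i =>
  (σ ((WithLp.toLp 2 (fun j => (z j).re) : EuclideanSpace ℝ (Fin n))) i : ℝ)
    - Complex.I * (σ ((WithLp.toLp 2 (fun j => (z j).im) : EuclideanSpace ℝ (Fin n))) i : ℝ)

/-!
Writing `z = x + i y`, the fixed points of `z ↦ σ(z̄)` are the `z` with `x ∈ V₂` and `y ∈ V₁`.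
A root `α` vanishes at such a `z` iff `⟪α, x⟫ = ⟪α, y⟫ = 0`, and by speciality this forces a root
of `R₂` to vanish at `x` or a root of `R₁` to vanish at `y`. So the fixed set is the complement in
`V₂ ⊕ i V₁` of the walls of `R₂` and `R₁`, and its components are the products of a chamber of
`G₂` in `V₂` with a chamber of `G₁` in `V₁`: open convex cones. A finite reflection group acts
simply transitively on its chambers (via a simple system of a positive system and the deletion
condition), so there are `|G₁| · |G₂|` of them.
-/

open scoped RealInnerProductSpace

section FiniteReflectionGroups

variable {E : Type*} [NormedAddCommGroup E] [InnerProductSpace ℝ E]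

section Reflection

abbrev rootReflection (β : E) : E ≃ₗᵢ[ℝ] E := (ℝ ∙ β)ᗮ.reflection

theorem rootReflection_apply (β x : E) :
    rootReflection β x = x - (2 * ⟪β, x⟫ / ⟪β, β⟫) • β := by
  rw [Submodule.reflection_orthogonal_apply, Submodule.reflection_singleton_apply,
    real_inner_self_eq_norm_sq, neg_sub]
  simp only [RCLike.ofReal_real_eq_id, id]
  module

theorem rootReflection_self (β : E) : rootReflection β β = -β :=
  Submodule.reflection_orthogonalComplement_singleton_eq_neg β

theorem rootReflection_mul_self (β : E) : rootReflection β * rootReflection β = 1 :=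
  Submodule.reflection_mul_reflection _

theorem rootReflection_inv (β : E) : (rootReflection β)⁻¹ = rootReflection β :=
  Submodule.reflection_inv

theorem rootReflection_smul {c : ℝ} (hc : c ≠ 0) (β : E) :
    rootReflection (c • β) = rootReflection β := by
  simp only [rootReflection, Submodule.span_singleton_smul_eq (IsUnit.mk0 c hc)]

theorem rootReflection_neg (β : E) : rootReflection (-β) = rootReflection β := by
  simpa using rootReflection_smul (neg_ne_zero.mpr one_ne_zero) β

theorem rootReflection_map (w : E ≃ₗᵢ[ℝ] E) (β : E) :
    rootReflection (w β) = w * rootReflection β * w⁻¹ := by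
  ext y
  have hy : y = w (w⁻¹ y) := (w.apply_symm_apply y).symm
  conv_lhs => rw [hy]
  simp only [LinearIsometryEquiv.coe_mul, Function.comp_apply, rootReflection_apply,
    LinearIsometryEquiv.inner_map_map, map_sub, map_smul]

theorem inner_rootReflection_apply (β x y : E) :
    ⟪rootReflection β x, y⟫ = ⟪x, y⟫ - 2 * ⟪β, x⟫ / ⟪β, β⟫ * ⟪β, y⟫ := by
  rw [rootReflection_apply, inner_sub_left, real_inner_smul_left]

theorem inner_rootReflection_lt {β γ q : E} (hγβ : 0 < ⟪γ, β⟫) (hγq : 0 < ⟪γ, q⟫) :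
    ⟪rootReflection γ β, q⟫ < ⟪β, q⟫ := by
  have hγγ : 0 < ⟪γ, γ⟫ := real_inner_self_pos.2 fun h => by simp [h] at hγβ
  rw [inner_rootReflection_apply, sub_lt_self_iff]
  positivity

theorem norm_rootReflection_sub_sq {β : E} (hβ : β ≠ 0) (x y : E) :
    ‖rootReflection β x - y‖ ^ 2 = ‖x - y‖ ^ 2 + 4 * ⟪β, x⟫ * ⟪β, y⟫ / ⟪β, β⟫ := by
  have hββ : ⟪β, β⟫ ≠ 0 := inner_self_ne_zero.mpr hβ
  rw [rootReflection_apply, sub_right_comm, norm_sub_sq_real, norm_smul, mul_pow,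
    Real.norm_eq_abs, sq_abs, ← real_inner_self_eq_norm_sq β, real_inner_smul_right,
    inner_sub_left, real_inner_comm x, real_inner_comm y]
  field_simp
  ring

end Reflection

section ReflectionGroup

def reflectionGroup (S : Finset E) : Subgroup (E ≃ₗᵢ[ℝ] E) :=
  Subgroup.closure {g | ∃ α ∈ S, g = rootReflection α}

def IsReflectionClosed (S : Finset E) : Prop :=
  ∀ α ∈ S, ∀ β ∈ S, rootReflection α β ∈ S

variable {S : Finset E}

theorem rootReflection_mem_reflectionGroup {α : E} (hα : α ∈ S) :
    rootReflection α ∈ reflectionGroup S :=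
  Subgroup.subset_closure ⟨α, hα, rfl⟩

theorem reflectionGroup_mono {T : Finset E} (h : S ⊆ T) : reflectionGroup S ≤ reflectionGroup T :=
  Subgroup.closure_mono fun _ ⟨α, hα, hg⟩ => ⟨α, h hα, hg⟩

@[elab_as_elim]
theorem reflectionGroup_induction {p : (E ≃ₗᵢ[ℝ] E) → Prop}
    (reflection : ∀ α ∈ S, p (rootReflection α)) (one : p 1)
    (mul : ∀ x y, p x → p y → p (x * y)) {w : E ≃ₗᵢ[ℝ] E} (hw : w ∈ reflectionGroup S) : p w := by
  induction hw using Subgroup.closure_induction'' with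
  | mem _ h => obtain ⟨α, hα, rfl⟩ := h; exact reflection α hα
  | inv_mem _ h => obtain ⟨α, hα, rfl⟩ := h; rw [rootReflection_inv]; exact reflection α hα
  | one => exact one
  | mul x y _ _ hx hy => exact mul x y hx hy

theorem apply_mem_submodule_of_mem_reflectionGroup {V : Submodule ℝ E} (hSV : ∀ α ∈ S, α ∈ V)
    {w : E ≃ₗᵢ[ℝ] E} (hw : w ∈ reflectionGroup S) {x : E} (hx : x ∈ V) : w x ∈ V := by
  refine reflectionGroup_induction (p := fun w => ∀ x ∈ V, w x ∈ V) ?_ (fun _ h => h)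
    (fun u v hu hv x hx => hu _ (hv x hx)) hw x hx
  intro α hα x hx
  rw [rootReflection_apply]
  exact V.sub_mem hx (V.smul_mem _ (hSV α hα))

namespace IsReflectionClosed

variable (hS : IsReflectionClosed S)
include hS

theorem apply_mem {w : E ≃ₗᵢ[ℝ] E} (hw : w ∈ reflectionGroup S) {β : E} (hβ : β ∈ S) :
    w β ∈ S := by
  refine reflectionGroup_induction (p := fun w => ∀ β ∈ S, w β ∈ S) (fun α hα => hS α hα)
    (fun _ h => h) (fun u v hu hv β hβ => hu _ (hv β hβ)) hw β hβ

theorem neg_mem {β : E} (hβ : β ∈ S) : -β ∈ S := by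
  simpa only [rootReflection_self] using hS β hβ β hβ

end IsReflectionClosed

theorem IsReflectionClosed.of_mem_iff {R : Finset E} {V : Submodule ℝ E} (hR : IsReflectionClosed R)
    (hS : ∀ β, β ∈ S ↔ β ∈ R ∧ β ∈ V) : IsReflectionClosed S := fun α hα β hβ => by
  rw [hS] at hα hβ ⊢
  refine ⟨hR α hα.1 β hβ.1, ?_⟩
  rw [rootReflection_apply]
  exact V.sub_mem hβ.2 (V.smul_mem _ hα.2)

end ReflectionGroup

section Chambers

def positiveRoots (S : Finset E) (q : E) : Finset E :=
  S.filter (0 < ⟪·, q⟫)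

def IsRegularVector (S : Finset E) (q : E) : Prop :=
  ∀ β ∈ S, ⟪β, q⟫ ≠ 0

def SameChamber (S : Finset E) (x y : E) : Prop :=
  ∀ β ∈ S, 0 < ⟪β, x⟫ * ⟪β, y⟫

variable {S : Finset E} {q : E}

theorem mem_positiveRoots {β : E} : β ∈ positiveRoots S q ↔ β ∈ S ∧ 0 < ⟪β, q⟫ :=
  Finset.mem_filter

theorem ne_zero_of_mem_positiveRoots {β : E} (hβ : β ∈ positiveRoots S q) : β ≠ 0 := by
  rintro rfl
  simp [mem_positiveRoots] at hβ

theorem neg_notMem_positiveRoots {β : E} (hβ : β ∈ positiveRoots S q) :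
    -β ∉ positiveRoots S q := by
  simp only [mem_positiveRoots, inner_neg_left, neg_pos, not_and, not_lt] at hβ ⊢
  exact fun _ => hβ.2.le

theorem IsReflectionClosed.mem_or_neg_mem_positiveRoots (hS : IsReflectionClosed S)
    (hq : IsRegularVector S q) {β : E} (hβ : β ∈ S) :
    β ∈ positiveRoots S q ∨ -β ∈ positiveRoots S q := by
  simp only [mem_positiveRoots, inner_neg_left, neg_pos]
  rcases (hq β hβ).lt_or_gt with h | h
  · exact Or.inr ⟨hS.neg_mem hβ, h⟩
  · exact Or.inl ⟨hβ, h⟩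

theorem inner_inv_apply (w : E ≃ₗᵢ[ℝ] E) (x y : E) : ⟪w⁻¹ x, y⟫ = ⟪x, w y⟫ :=
  w.symm.inner_map_eq_flip x y

theorem IsReflectionClosed.isRegularVector_apply (hS : IsReflectionClosed S)
    (hq : IsRegularVector S q) {w : E ≃ₗᵢ[ℝ] E} (hw : w ∈ reflectionGroup S) : IsRegularVector S (w q) := fun β hβ => by
  rw [← inner_inv_apply]
  exact hq _ (hS.apply_mem (inv_mem hw) hβ)

theorem exists_isRegularVector_mem (V : Submodule ℝ E) (hSV : ∀ β ∈ S, β ∈ V)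
    (hS0 : ∀ β ∈ S, β ≠ 0) :
    ∃ q ∈ V, IsRegularVector S q := by
  by_contra! h
  simp only [IsRegularVector, not_forall, not_not] at h
  -- otherwise `V` would be covered by the finitely many proper subspaces `V ∩ βᗮ`
  obtain ⟨⟨β, hβ⟩, hker⟩ := Subspace.exists_eq_top_of_iUnion_eq_univ
    (p := fun β : S => LinearMap.ker ((innerₛₗ ℝ (β : E)).comp V.subtype))
    (Set.eq_univ_of_forall fun v => by
      obtain ⟨β, hβ, hv⟩ := h v v.2
      exact Set.mem_iUnion.2 ⟨⟨β, hβ⟩, hv⟩)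
  have : ⟪β, β⟫ = 0 := LinearMap.congr_fun (LinearMap.ker_eq_top.1 hker) ⟨β, hSV β hβ⟩
  exact hS0 β hβ (inner_self_eq_zero.1 this)

end Chambers

section SimpleSystem

def IsNonnegComb (Δ : Finset E) (x : E) : Prop :=
  ∃ c : E → ℝ, (∀ γ ∈ Δ, 0 ≤ c γ) ∧ x = ∑ γ ∈ Δ, c γ • γ

def IsPositiveGenerating (S : Finset E) (q : E) (Δ : Finset E) : Prop :=
  Δ ⊆ positiveRoots S q ∧ ∀ β ∈ positiveRoots S q, IsNonnegComb Δ β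

def IsSimpleSystem (S : Finset E) (q : E) (Δ : Finset E) : Prop :=
  IsPositiveGenerating S q Δ ∧ ∀ Δ', IsPositiveGenerating S q Δ' → Δ.card ≤ Δ'.card

variable {S Δ : Finset E} {q : E}

theorem IsNonnegComb.of_mem {x : E} (hx : x ∈ Δ) : IsNonnegComb Δ x := by
  classical
  refine ⟨fun γ => if γ = x then 1 else 0, fun γ _ => by positivity, ?_⟩
  simp [hx]

theorem IsNonnegComb.erase [DecidableEq E] {x δ : E} (hx : IsNonnegComb Δ x) (hδ : δ ∈ Δ)
    (hδ' : IsNonnegComb (Δ.erase δ) δ) : IsNonnegComb (Δ.erase δ) x := by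
  obtain ⟨c, hc, rfl⟩ := hx
  obtain ⟨d, hd, hdδ⟩ := hδ'
  refine ⟨fun γ => c γ + c δ * d γ, fun γ hγ => ?_, ?_⟩
  · have := hc γ (Finset.mem_of_mem_erase hγ)
    have := hc δ hδ
    have := hd γ hγ
    positivity
  · have hcδ : c δ • δ = c δ • ∑ γ ∈ Δ.erase δ, d γ • γ := congrArg _ hdδ
    rw [← Finset.add_sum_erase Δ _ hδ, hcδ, Finset.smul_sum]
    simp only [add_smul, Finset.sum_add_distrib, mul_smul, add_comm]

theorem exists_isSimpleSystem (S : Finset E) (q : E) : ∃ Δ, IsSimpleSystem S q Δ := by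
  classical
  have hP : IsPositiveGenerating S q (positiveRoots S q) :=
    ⟨subset_rfl, fun _ hβ => .of_mem hβ⟩
  obtain ⟨Δ, hΔ, hmin⟩ := ((positiveRoots S q).powerset.filter
    (IsPositiveGenerating S q)).exists_min_image Finset.card
    ⟨_, Finset.mem_filter.2 ⟨Finset.mem_powerset_self _, hP⟩⟩
  refine ⟨Δ, (Finset.mem_filter.1 hΔ).2, fun Δ' hΔ' => hmin Δ' ?_⟩
  exact Finset.mem_filter.2 ⟨Finset.mem_powerset.2 hΔ'.1, hΔ'⟩

theorem IsPositiveGenerating.exists_inner_pos (hΔ : IsPositiveGenerating S q Δ) {β : E}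
    (hβ : β ∈ positiveRoots S q) : ∃ γ ∈ Δ, 0 < ⟪γ, β⟫ := by
  by_contra! h
  obtain ⟨a, ha, haeq⟩ := hΔ.2 β hβ
  have : ⟪β, β⟫ ≤ 0 := by
    nth_rewrite 1 [haeq]
    rw [sum_inner]
    exact Finset.sum_nonpos fun γ hγ => by
      rw [real_inner_smul_left]; exact mul_nonpos_of_nonneg_of_nonpos (ha γ hγ) (h γ hγ)
  exact ne_zero_of_mem_positiveRoots hβ (real_inner_self_nonpos.1 this)

namespace IsSimpleSystem

variable [DecidableEq E]

theorem not_isNonnegComb_erase (hΔ : IsSimpleSystem S q Δ) {δ : E} (hδ : δ ∈ Δ) :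
    ¬ IsNonnegComb (Δ.erase δ) δ := fun h => by
  have := hΔ.2 _ ⟨fun γ hγ => hΔ.1.1 (Finset.mem_of_mem_erase hγ),
    fun β hβ => (hΔ.1.2 β hβ).erase hδ h⟩
  exact (Finset.card_erase_lt_of_mem hδ).not_ge this

theorem coeff_eq_zero_of_smul_eq_sum (hΔ : IsSimpleSystem S q Δ) {δ : E} (hδ : δ ∈ Δ) {m : ℝ}
    {c : E → ℝ} (hc : ∀ γ ∈ Δ.erase δ, 0 ≤ c γ) (h : m • δ = ∑ γ ∈ Δ.erase δ, c γ • γ) :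
    ∀ γ ∈ Δ.erase δ, c γ = 0 := by
  have hpos : ∀ γ ∈ Δ, 0 < ⟪γ, q⟫ := fun γ hγ => (mem_positiveRoots.1 (hΔ.1.1 hγ)).2
  rcases lt_or_ge 0 m with hm | hm
  · refine absurd ⟨fun γ => c γ / m, fun γ hγ => div_nonneg (hc γ hγ) hm.le, ?_⟩
      (hΔ.not_isNonnegComb_erase hδ)
    calc δ = m⁻¹ • (m • δ) := (inv_smul_smul₀ hm.ne' δ).symm
      _ = _ := by simp only [h, Finset.smul_sum, smul_smul, div_eq_inv_mul]
  · have hsum : ∑ γ ∈ Δ.erase δ, c γ * ⟪γ, q⟫ = m * ⟪δ, q⟫ := by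
      simp only [← real_inner_smul_left, ← sum_inner, ← h]
    have hle : ∑ γ ∈ Δ.erase δ, c γ * ⟪γ, q⟫ ≤ 0 :=
      hsum ▸ mul_nonpos_of_nonpos_of_nonneg hm (hpos δ hδ).le
    intro γ hγ
    have hγ0 := (Finset.sum_eq_zero_iff_of_nonneg fun γ hγ => mul_nonneg (hc γ hγ)
      (hpos γ (Finset.mem_of_mem_erase hγ)).le).1
      (hle.antisymm (Finset.sum_nonneg fun γ hγ => mul_nonneg (hc γ hγ)
        (hpos γ (Finset.mem_of_mem_erase hγ)).le)) γ hγ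
    exact (mul_eq_zero.1 hγ0).resolve_right (hpos γ (Finset.mem_of_mem_erase hγ)).ne'

end IsSimpleSystem

end SimpleSystem

section SimpleReflections

def wordProd (l : List E) : E ≃ₗᵢ[ℝ] E :=
  (l.map rootReflection).prod

@[simp] theorem wordProd_nil : wordProd ([] : List E) = 1 := rfl

@[simp] theorem wordProd_cons (α : E) (l : List E) :
    wordProd (α :: l) = rootReflection α * wordProd l := List.prod_cons

@[simp] theorem wordProd_append (l l' : List E) :
    wordProd (l ++ l') = wordProd l * wordProd l' := by
  simp [wordProd]

variable {S Δ : Finset E} {q : E}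

theorem wordProd_mem_reflectionGroup {l : List E} (hl : ∀ α ∈ l, α ∈ S) :
    wordProd l ∈ reflectionGroup S :=
  (reflectionGroup S).list_prod_mem fun _ h => by
    obtain ⟨α, hα, rfl⟩ := List.mem_map.1 h
    exact rootReflection_mem_reflectionGroup (hl α hα)

theorem exists_wordProd_eq {w : E ≃ₗᵢ[ℝ] E} (hw : w ∈ reflectionGroup S) :
    ∃ l : List E, (∀ α ∈ l, α ∈ S) ∧ wordProd l = w := by
  refine reflectionGroup_induction (p := fun w => ∃ l : List E, (∀ α ∈ l, α ∈ S) ∧ wordProd l = w)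
    (fun α hα => ⟨[α], by simpa using hα, by simp⟩) ⟨[], by simp, rfl⟩ ?_ hw
  rintro _ _ ⟨l, hl, rfl⟩ ⟨l', hl', rfl⟩
  exact ⟨l ++ l', fun α hα => (List.mem_append.1 hα).elim (hl α) (hl' α), wordProd_append l l'⟩

namespace IsSimpleSystem

theorem subset (hΔ : IsSimpleSystem S q Δ) : Δ ⊆ S :=
  fun _ hδ => (mem_positiveRoots.1 (hΔ.1.1 hδ)).1

variable (hS : IsReflectionClosed S) (hq : IsRegularVector S q) (hΔ : IsSimpleSystem S q Δ)
include hS hq hΔ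

theorem rootReflection_mem_positiveRoots {δ β : E} (hδ : δ ∈ Δ) (hβ : β ∈ positiveRoots S q)
    (hne : ∀ c : ℝ, β ≠ c • δ) : rootReflection δ β ∈ positiveRoots S q := by
  classical
  obtain ⟨a, ha, haeq⟩ := hΔ.1.2 β hβ
  obtain ⟨γ₀, hγ₀, ha₀⟩ : ∃ γ ∈ Δ.erase δ, a γ ≠ 0 := by
    by_contra! h
    refine hne (a δ) ?_
    rw [haeq, ← Finset.add_sum_erase Δ _ hδ,
      Finset.sum_eq_zero fun γ hγ => by rw [h γ hγ, zero_smul], add_zero]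
  have hsS := hS δ (hΔ.subset hδ) β (mem_positiveRoots.1 hβ).1
  refine (hS.mem_or_neg_mem_positiveRoots hq hsS).resolve_right fun hneg => ?_
  obtain ⟨b, hb, hbeq⟩ := hΔ.1.2 _ hneg
  rw [rootReflection_apply] at hbeq
  have key : (2 * ⟪δ, β⟫ / ⟪δ, δ⟫ - a δ - b δ) • δ = ∑ γ ∈ Δ.erase δ, (a γ + b γ) • γ := by
    have ha' := Finset.add_sum_erase Δ (fun γ => a γ • γ) hδ
    have hb' := Finset.add_sum_erase Δ (fun γ => b γ • γ) hδ
    simp only [add_smul, Finset.sum_add_distrib]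
    linear_combination (norm := module) haeq + hbeq - ha' - hb'
  have hab := hΔ.coeff_eq_zero_of_smul_eq_sum hδ (fun γ hγ =>
    add_nonneg (ha γ (Finset.mem_of_mem_erase hγ)) (hb γ (Finset.mem_of_mem_erase hγ))) key γ₀ hγ₀
  have := ha γ₀ (Finset.mem_of_mem_erase hγ₀)
  have := hb γ₀ (Finset.mem_of_mem_erase hγ₀)
  exact ha₀ (by linarith)

theorem reflectionGroup_eq : reflectionGroup S = reflectionGroup Δ := by
  classical
  refine le_antisymm ?_ (reflectionGroup_mono hΔ.subset)
  suffices h : ∀ β ∈ positiveRoots S q, rootReflection β ∈ reflectionGroup Δ by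
    refine (Subgroup.closure_le _).2 ?_
    rintro _ ⟨α, hα, rfl⟩
    rcases hS.mem_or_neg_mem_positiveRoots hq hα with hα' | hα'
    · exact h α hα'
    · rw [← rootReflection_neg]
      exact h _ hα'
  by_contra! hbad
  obtain ⟨β, hβ, hmin⟩ := ((positiveRoots S q).filter (rootReflection · ∉ reflectionGroup Δ)
    ).exists_min_image (⟪·, q⟫) (hbad.imp fun β hβ => Finset.mem_filter.2 hβ)
  obtain ⟨hβP, hβW⟩ := Finset.mem_filter.1 hβ
  obtain ⟨γ, hγ, hγβ⟩ := hΔ.1.exists_inner_pos hβP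
  by_cases hray : ∃ c : ℝ, β = c • γ
  · obtain ⟨c, rfl⟩ := hray
    have hc : c ≠ 0 := by
      rintro rfl
      exact ne_zero_of_mem_positiveRoots hβP (zero_smul ℝ γ)
    exact hβW (by simpa only [rootReflection_smul hc] using rootReflection_mem_reflectionGroup hγ)
  push Not at hray
  -- `rootReflection γ β` is a positive root of smaller height, so by minimality its reflection
  -- lies in `reflectionGroup Δ`, and conjugating back by the simple reflection gives `β`'s.
  have hβ' := hΔ.rootReflection_mem_positiveRoots hS hq hγ hβP hray
  have hlt := inner_rootReflection_lt hγβ (mem_positiveRoots.1 (hΔ.1.1 hγ)).2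
  have hβ'W : rootReflection (rootReflection γ β) ∈ reflectionGroup Δ := by
    by_contra h
    exact (hmin _ (Finset.mem_filter.2 ⟨hβ', h⟩)).not_gt hlt
  have hγW := rootReflection_mem_reflectionGroup hγ
  rw [rootReflection_map, rootReflection_inv] at hβ'W
  refine hβW ?_
  convert mul_mem (mul_mem hγW hβ'W) hγW using 1
  simp only [← mul_assoc, rootReflection_mul_self, one_mul]
  rw [mul_assoc, rootReflection_mul_self, mul_one]

/-- The deletion condition. -/
theorem exists_shorter_word {δ : E} (hδ : δ ∈ Δ) (l : List E) (hl : ∀ γ ∈ l, γ ∈ Δ)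
    (hneg : -(wordProd l δ) ∈ positiveRoots S q) :
    ∃ l' : List E, (∀ γ ∈ l', γ ∈ Δ) ∧ l'.length < l.length ∧
      wordProd l' = wordProd l * rootReflection δ := by
  induction l with
  | nil => exact absurd hneg (neg_notMem_positiveRoots (hΔ.1.1 hδ))
  | cons δ₁ t ih =>
    have ht : ∀ γ ∈ t, γ ∈ Δ := fun γ hγ => hl γ (List.mem_cons_of_mem _ hγ)
    have hδ₁ : δ₁ ∈ Δ := hl δ₁ List.mem_cons_self
    by_cases htδ : -(wordProd t δ) ∈ positiveRoots S q
    · obtain ⟨t', ht', hlen, heq⟩ := ih ht htδ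
      refine ⟨δ₁ :: t', fun γ hγ => ?_, by simpa using hlen, by simp [heq, mul_assoc]⟩
      exact (List.mem_cons.1 hγ).elim (· ▸ hδ₁) (ht' γ)
    have htδ' : wordProd t δ ∈ positiveRoots S q :=
      (hS.mem_or_neg_mem_positiveRoots hq (hS.apply_mem
        (reflectionGroup_mono hΔ.subset (wordProd_mem_reflectionGroup ht))
        (hΔ.subset hδ))).resolve_right htδ
    -- the simple reflection `δ₁` sends the positive root `wordProd t δ` to a negative one,
    -- so the two are proportional
    obtain ⟨c, hc⟩ : ∃ c : ℝ, wordProd t δ = c • δ₁ := by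
      by_contra! hray
      refine neg_notMem_positiveRoots
        (hΔ.rootReflection_mem_positiveRoots hS hq hδ₁ htδ' hray) ?_
      simpa using hneg
    have hc0 : c ≠ 0 := by
      rintro rfl
      exact ne_zero_of_mem_positiveRoots htδ' (by rw [hc, zero_smul])
    have hconj : rootReflection δ₁ = wordProd t * rootReflection δ * (wordProd t)⁻¹ := by
      rw [← rootReflection_map, hc, rootReflection_smul hc0]
    refine ⟨t, ht, by simp, ?_⟩
    rw [wordProd_cons, hconj, inv_mul_cancel_right, mul_assoc, rootReflection_mul_self, mul_one]

theorem eq_one_of_mapsTo {w : E ≃ₗᵢ[ℝ] E} (hw : w ∈ reflectionGroup S)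
    (hP : ∀ β ∈ positiveRoots S q, w β ∈ positiveRoots S q) : w = 1 := by
  rw [hΔ.reflectionGroup_eq hS hq] at hw
  obtain ⟨l, hl, rfl⟩ := exists_wordProd_eq hw
  clear hw
  induction h : l.length using Nat.strong_induction_on generalizing l with
  | _ k ih =>
    rcases l.eq_nil_or_concat' with rfl | ⟨t, δ, rfl⟩
    · rfl
    have hδ : δ ∈ Δ := hl δ (by simp)
    have ht : ∀ γ ∈ t, γ ∈ Δ := fun γ hγ => hl γ (by simp [hγ])
    have hneg : -(wordProd t δ) ∈ positiveRoots S q := by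
      simpa [rootReflection_self] using hP δ (hΔ.1.1 hδ)
    obtain ⟨t', ht', hlen, heq⟩ := hΔ.exists_shorter_word hS hq hδ t ht hneg
    simp only [wordProd_append, wordProd_cons, wordProd_nil, mul_one, ← heq] at hP ⊢
    exact ih t'.length (by simp at h; omega) t' ht' hP rfl

end IsSimpleSystem

end SimpleReflections

section SimpleTransitivity

variable {S : Finset E} {q : E}

namespace IsReflectionClosed

variable (hS : IsReflectionClosed S)
include hS

theorem eq_one_of_mapsTo_positiveRoots (hq : IsRegularVector S q) {w : E ≃ₗᵢ[ℝ] E}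
    (hw : w ∈ reflectionGroup S) (hP : ∀ β ∈ positiveRoots S q, w β ∈ positiveRoots S q) :
    w = 1 := by
  obtain ⟨Δ, hΔ⟩ := exists_isSimpleSystem S q
  exact hΔ.eq_one_of_mapsTo hS hq hw hP

theorem eq_of_sameChamber (hq : IsRegularVector S q) {w w' : E ≃ₗᵢ[ℝ] E}
    (hw : w ∈ reflectionGroup S) (hw' : w' ∈ reflectionGroup S)
    (h : SameChamber S (w q) (w' q)) : w = w' := by
  have hu : w'⁻¹ * w ∈ reflectionGroup S := mul_mem (inv_mem hw') hw
  refine (inv_mul_eq_one.1 (hS.eq_one_of_mapsTo_positiveRoots hq hu fun β hβ => ?_)).symm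
  obtain ⟨hβS, hβq⟩ := mem_positiveRoots.1 hβ
  refine mem_positiveRoots.2 ⟨hS.apply_mem hu hβS, ?_⟩
  have hsign := h (w β) (hS.apply_mem hw hβS)
  rw [w.inner_map_map] at hsign
  rw [LinearIsometryEquiv.coe_mul, Function.comp_apply, inner_inv_apply]
  exact (pos_iff_pos_of_mul_pos hsign).1 hβq

/-- Moving `q'` by a group element nearest to `q` lands in the chamber of `q`: reflecting in a
wall separating the two would bring it strictly closer. -/
theorem exists_sameChamber [Finite (reflectionGroup S)] (hq : IsRegularVector S q) {q' : E}
    (hq' : IsRegularVector S q') : ∃ w ∈ reflectionGroup S, SameChamber S (w q') q := by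
  obtain ⟨⟨w, hwS⟩, hw⟩ :=
    Finite.exists_min fun w : reflectionGroup S => ‖(w : E ≃ₗᵢ[ℝ] E) q' - q‖ ^ 2
  refine ⟨w, hwS, fun β hβ => ?_⟩
  have hne := mul_ne_zero (hS.isRegularVector_apply hq' hwS β hβ) (hq β hβ)
  refine hne.lt_or_gt.resolve_left fun hneg => ?_
  have hβ0 : β ≠ 0 := fun h => hq β hβ (by simp [h])
  have hcloser : ‖w q' - q‖ ^ 2 ≤ ‖rootReflection β (w q') - q‖ ^ 2 :=
    hw ⟨_, mul_mem (rootReflection_mem_reflectionGroup hβ) hwS⟩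
  rw [norm_rootReflection_sub_sq hβ0, mul_assoc] at hcloser
  have : 4 * (⟪β, w q'⟫ * ⟪β, q⟫) / ⟪β, β⟫ < 0 :=
    div_neg_of_neg_of_pos (by linarith) (real_inner_self_pos.2 hβ0)
  linarith

end IsReflectionClosed

end SimpleTransitivity

end FiniteReflectionGroups

section HyperplaneComplement

variable {X : Type*} [AddCommGroup X] [Module ℝ X] [TopologicalSpace X] {ι : Type*}

theorem convex_setOf_forall_pos_mul {A : Set X} (hA : Convex ℝ A) (ℓ : ι → X →L[ℝ] ℝ) (x : X) :
    Convex ℝ {y ∈ A | ∀ i, 0 < ℓ i y * ℓ i x} := by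
  show Convex ℝ (A ∩ {y | ∀ i, 0 < ℓ i y * ℓ i x})
  rw [Set.ofPred_forall]
  exact hA.inter (convex_iInter fun i =>
    convex_halfSpace_gt (LinearMap.mulRight ℝ (ℓ i x) ∘ₗ (ℓ i).toLinearMap).isLinear 0)

/-- Each chamber is convex, and it is relatively clopen since the sign of every `ℓ i` is locally
constant off its hyperplane. -/
theorem connectedComponentIn_setOf_ne_zero [IsTopologicalAddGroup X] [ContinuousSMul ℝ X]
    [Finite ι] {A : Set X} (hA : Convex ℝ A) (ℓ : ι → X →L[ℝ] ℝ) {x : X}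
    (hx : x ∈ {y ∈ A | ∀ i, ℓ i y ≠ 0}) :
    connectedComponentIn {y ∈ A | ∀ i, ℓ i y ≠ 0} x = {y ∈ A | ∀ i, 0 < ℓ i y * ℓ i x} := by
  set U := {y ∈ A | ∀ i, ℓ i y ≠ 0}
  have hxx : ∀ i, 0 < ℓ i x * ℓ i x := fun i => mul_self_pos.2 (hx.2 i)
  refine Set.Subset.antisymm (fun y hy => ⟨(connectedComponentIn_subset U x hy).1, ?_⟩) ?_
  · have hpos : IsOpen {y | ∀ i, 0 < ℓ i y * ℓ i x} := by
      rw [Set.ofPred_forall]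
      exact isOpen_iInter_of_finite fun i => isOpen_lt continuous_const (by fun_prop)
    have hneg : IsOpen {y | ∃ i, ℓ i y * ℓ i x < 0} := by
      rw [Set.ofPred_exists]
      exact isOpen_iUnion fun i => isOpen_lt (by fun_prop) continuous_const
    refine isPreconnected_connectedComponentIn.subset_left_of_subset_union hpos hneg
      (Set.disjoint_left.2 fun z hz ⟨i, hi⟩ => (hz i).not_gt hi) (fun z hz => ?_)
      ⟨x, mem_connectedComponentIn hx, hxx⟩ hy
    have hzU := (connectedComponentIn_subset U x hz).2
    by_cases h : ∀ i, 0 < ℓ i z * ℓ i x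
    · exact Or.inl h
    · push Not at h
      obtain ⟨i, hi⟩ := h
      exact Or.inr ⟨i, hi.lt_of_ne (mul_ne_zero (hzU i) (hx.2 i))⟩
  · exact (convex_setOf_forall_pos_mul hA ℓ x).isPreconnected.subset_connectedComponentIn
      ⟨hx.1, hxx⟩ fun y hy => ⟨hy.1, fun i => left_ne_zero_of_mul (hy.2 i).ne'⟩

theorem contractibleSpace_connectedComponentIn_setOf_ne_zero [IsTopologicalAddGroup X]
    [ContinuousSMul ℝ X] [Finite ι] {A : Set X} (hA : Convex ℝ A) (ℓ : ι → X →L[ℝ] ℝ) {x : X}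
    (hx : x ∈ {y ∈ A | ∀ i, ℓ i y ≠ 0}) :
    ContractibleSpace (connectedComponentIn {y ∈ A | ∀ i, ℓ i y ≠ 0} x) := by
  rw [connectedComponentIn_setOf_ne_zero hA ℓ hx]
  exact (convex_setOf_forall_pos_mul hA ℓ x).contractibleSpace
    ⟨x, hx.1, fun i => mul_self_pos.2 (hx.2 i)⟩

end HyperplaneComplement

theorem ConnectedComponents.coe_eq_coe_iff_mem_connectedComponentIn {X : Type*}
    [TopologicalSpace X] {U : Set X} {x y : U} :
    (x : ConnectedComponents U) = y ↔ (x : X) ∈ connectedComponentIn U y := by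
  rw [ConnectedComponents.coe_eq_coe', connectedComponentIn_eq_image y.2,
    Subtype.val_injective.mem_set_image]

theorem Nat.card_connectedComponents_eq {X : Type*} [TopologicalSpace X] {U : Set X}
    {κ : Type*} (p : κ → U) (hinj : ∀ i j, (p i : X) ∈ connectedComponentIn U (p j) → i = j)
    (hsurj : ∀ x ∈ U, ∃ i, (p i : X) ∈ connectedComponentIn U x) :
    Nat.card (ConnectedComponents U) = Nat.card κ := by
  refine (Nat.card_congr (Equiv.ofBijective (fun i => (p i : ConnectedComponents U))
    ⟨fun i j h => hinj i j ?_, fun c => ?_⟩)).symm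
  · exact ConnectedComponents.coe_eq_coe_iff_mem_connectedComponentIn.1 h
  · obtain ⟨x, rfl⟩ := ConnectedComponents.surjective_coe c
    obtain ⟨i, hi⟩ := hsurj x x.2
    exact ⟨i, ConnectedComponents.coe_eq_coe_iff_mem_connectedComponentIn.2 hi⟩

section Complexification

variable {n : ℕ}

def reVec : (Fin n → ℂ) →L[ℝ] EuclideanSpace ℝ (Fin n) :=
  (EuclideanSpace.equiv (Fin n) ℝ).symm.toContinuousLinearMap ∘L
    ContinuousLinearMap.pi fun i => Complex.reCLM ∘L ContinuousLinearMap.proj i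

def imVec : (Fin n → ℂ) →L[ℝ] EuclideanSpace ℝ (Fin n) :=
  (EuclideanSpace.equiv (Fin n) ℝ).symm.toContinuousLinearMap ∘L
    ContinuousLinearMap.pi fun i => Complex.imCLM ∘L ContinuousLinearMap.proj i

theorem reVec_apply (z : Fin n → ℂ) : reVec z = WithLp.toLp 2 fun j => (z j).re := rfl

theorem imVec_apply (z : Fin n → ℂ) : imVec z = WithLp.toLp 2 fun j => (z j).im := rfl

def ofReIm (x y : EuclideanSpace ℝ (Fin n)) : Fin n → ℂ := fun j => x j + y j * Complex.I

@[simp] theorem reVec_ofReIm (x y : EuclideanSpace ℝ (Fin n)) : reVec (ofReIm x y) = x := by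
  ext j
  simp [reVec_apply, ofReIm]

@[simp] theorem imVec_ofReIm (x y : EuclideanSpace ℝ (Fin n)) : imVec (ofReIm x y) = y := by
  ext j
  simp [imVec_apply, ofReIm]

theorem sum_mul_eq_zero_iff (α : EuclideanSpace ℝ (Fin n)) (z : Fin n → ℂ) :
    ∑ i, (α i : ℂ) * z i = 0 ↔ ⟪α, reVec z⟫ = 0 ∧ ⟪α, imVec z⟫ = 0 := by
  simp [Complex.ext_iff, Complex.re_sum, Complex.im_sum, PiLp.inner_apply, reVec_apply,
    imVec_apply, mul_comm]

theorem barAction_eq_self_iff (σ : EuclideanSpace ℝ (Fin n) ≃ₗᵢ[ℝ] EuclideanSpace ℝ (Fin n))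
    (z : Fin n → ℂ) :
    barAction σ z = z ↔ σ (reVec z) = reVec z ∧ σ (imVec z) = -imVec z := by
  simp only [funext_iff, Complex.ext_iff, barAction, reVec_apply, imVec_apply,
    WithLp.ext_iff, ← forall_and]
  simp [neg_eq_iff_eq_neg]

end Complexification

section Eigenspaces

variable {n : ℕ} {σ : EuclideanSpace ℝ (Fin n) ≃ₗᵢ[ℝ] EuclideanSpace ℝ (Fin n)}

theorem mem_plusEigenspace_iff {x : EuclideanSpace ℝ (Fin n)} :
    x ∈ plusEigenspace σ ↔ σ x = x := by
  rw [plusEigenspace, Module.End.mem_eigenspace_iff, one_smul]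
  rfl

theorem mem_minusEigenspace_iff {x : EuclideanSpace ℝ (Fin n)} :
    x ∈ minusEigenspace σ ↔ σ x = -x := by
  rw [minusEigenspace, Module.End.mem_eigenspace_iff, neg_one_smul]
  rfl

theorem minusEigenspace_eq_orthogonal (hσ : σ * σ = 1) :
    minusEigenspace σ = (plusEigenspace σ)ᗮ := by
  refine le_antisymm (fun x hx => (Submodule.mem_orthogonal _ _).2 fun u hu => ?_) fun x hx => ?_
  · have := σ.inner_map_map u x
    rw [mem_plusEigenspace_iff.1 hu, mem_minusEigenspace_iff.1 hx, inner_neg_right] at this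
    linarith
  · have hσσ : σ (σ x) = x := DFunLike.congr_fun hσ x
    have hs : x + σ x ∈ plusEigenspace σ := by
      rw [mem_plusEigenspace_iff, map_add, hσσ, add_comm]
    have h1 : ⟪x + σ x, x⟫ = 0 := (Submodule.mem_orthogonal _ _).1 hx _ hs
    have h2 : ⟪x + σ x, σ x⟫ = 0 := by
      rw [← mem_plusEigenspace_iff.1 hs, σ.inner_map_map, h1]
    have : x + σ x = 0 := by
      rw [← inner_self_eq_zero (𝕜 := ℝ), inner_add_right, h1, h2, add_zero]
    rw [mem_minusEigenspace_iff]
    exact eq_neg_of_add_eq_zero_right this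

theorem plusEigenspace_eq_orthogonal (hσ : σ * σ = 1) :
    plusEigenspace σ = (minusEigenspace σ)ᗮ := by
  rw [minusEigenspace_eq_orthogonal hσ, Submodule.orthogonal_orthogonal]

end Eigenspaces

section RegularPart

variable {n : ℕ}

def reImSubmodule (V W : Submodule ℝ (EuclideanSpace ℝ (Fin n))) : Submodule ℝ (Fin n → ℂ) :=
  V.comap (reVec : (Fin n → ℂ) →L[ℝ] _).toLinearMap ⊓
    W.comap (imVec : (Fin n → ℂ) →L[ℝ] _).toLinearMap

def wallFunctional (S T : Finset (EuclideanSpace ℝ (Fin n))) :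
    S ⊕ T → (Fin n → ℂ) →L[ℝ] ℝ :=
  Sum.elim (fun β => innerSL ℝ (β : EuclideanSpace ℝ (Fin n)) ∘L reVec)
    (fun β => innerSL ℝ (β : EuclideanSpace ℝ (Fin n)) ∘L imVec)

/-- The complement in `V ⊕ iW` of the walls of `S` (on real parts) and of `T` (on imaginary
parts). -/
def regularPart (V W : Submodule ℝ (EuclideanSpace ℝ (Fin n)))
    (S T : Finset (EuclideanSpace ℝ (Fin n))) : Set (Fin n → ℂ) :=
  {z ∈ (reImSubmodule V W : Set (Fin n → ℂ)) | ∀ i, wallFunctional S T i z ≠ 0}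

variable {V W : Submodule ℝ (EuclideanSpace ℝ (Fin n))} {S T : Finset (EuclideanSpace ℝ (Fin n))}

theorem mem_regularPart_iff {z : Fin n → ℂ} :
    z ∈ regularPart V W S T ↔ reVec z ∈ V ∧ imVec z ∈ W ∧
      IsRegularVector S (reVec z) ∧ IsRegularVector T (imVec z) := by
  simp [regularPart, reImSubmodule, wallFunctional, IsRegularVector, and_assoc]

theorem mem_connectedComponentIn_regularPart_iff {z y : Fin n → ℂ} (hz : z ∈ regularPart V W S T) :
    y ∈ connectedComponentIn (regularPart V W S T) z ↔ reVec y ∈ V ∧ imVec y ∈ W ∧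
      SameChamber S (reVec y) (reVec z) ∧ SameChamber T (imVec y) (imVec z) := by
  rw [regularPart, connectedComponentIn_setOf_ne_zero (Submodule.convex _) _ hz]
  simp [reImSubmodule, wallFunctional, SameChamber, and_assoc]

theorem contractibleSpace_connectedComponentIn_regularPart {z : Fin n → ℂ}
    (hz : z ∈ regularPart V W S T) :
    ContractibleSpace (connectedComponentIn (regularPart V W S T) z) :=
  contractibleSpace_connectedComponentIn_setOf_ne_zero (Submodule.convex _) _ hz

/-- Fixing regular base points `q ∈ V`, `q' ∈ W`, the components are indexed by the pairs
`(g, g')` through the chamber of `g q + i g' q'`. -/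
theorem card_connectedComponents_regularPart (hSV : ∀ β ∈ S, β ∈ V) (hTW : ∀ β ∈ T, β ∈ W)
    (hS0 : ∀ β ∈ S, β ≠ 0) (hT0 : ∀ β ∈ T, β ≠ 0) (hS : IsReflectionClosed S)
    (hT : IsReflectionClosed T) [Finite (reflectionGroup S)] [Finite (reflectionGroup T)] :
    Nat.card (ConnectedComponents (regularPart V W S T)) =
      Nat.card (reflectionGroup S) * Nat.card (reflectionGroup T) := by
  obtain ⟨q, hqV, hq⟩ := exists_isRegularVector_mem V hSV hS0
  obtain ⟨q', hq'W, hq'⟩ := exists_isRegularVector_mem W hTW hT0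
  have hmem (g : reflectionGroup S × reflectionGroup T) :
      ofReIm ((g.1 : _ ≃ₗᵢ[ℝ] _) q) ((g.2 : _ ≃ₗᵢ[ℝ] _) q') ∈ regularPart V W S T := by
    rw [mem_regularPart_iff, reVec_ofReIm, imVec_ofReIm]
    exact ⟨apply_mem_submodule_of_mem_reflectionGroup hSV g.1.2 hqV,
      apply_mem_submodule_of_mem_reflectionGroup hTW g.2.2 hq'W,
      hS.isRegularVector_apply hq g.1.2, hT.isRegularVector_apply hq' g.2.2⟩
  rw [← Nat.card_prod]
  refine Nat.card_connectedComponents_eq (fun g => ⟨_, hmem g⟩) (fun g h hgh => ?_) fun z hz => ?_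
  · rw [mem_connectedComponentIn_regularPart_iff (hmem h)] at hgh
    simp only [reVec_ofReIm, imVec_ofReIm] at hgh
    exact Prod.ext (Subtype.ext (hS.eq_of_sameChamber hq g.1.2 h.1.2 hgh.2.2.1))
      (Subtype.ext (hT.eq_of_sameChamber hq' g.2.2 h.2.2 hgh.2.2.2))
  · obtain ⟨-, -, hzS, hzT⟩ := mem_regularPart_iff.1 hz
    obtain ⟨g, hg, hgz⟩ := hS.exists_sameChamber hzS hq
    obtain ⟨g', hg', hg'z⟩ := hT.exists_sameChamber hzT hq'
    refine ⟨(⟨g, hg⟩, ⟨g', hg'⟩), (mem_connectedComponentIn_regularPart_iff hz).2 ?_⟩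
    simp only [reVec_ofReIm, imVec_ofReIm]
    exact ⟨apply_mem_submodule_of_mem_reflectionGroup hSV hg hqV,
      apply_mem_submodule_of_mem_reflectionGroup hTW hg' hq'W, hgz, hg'z⟩

end RegularPart

theorem inner_ne_zero_or_of_orthogonalProjection_eq_smul {E : Type*} [NormedAddCommGroup E]
    [InnerProductSpace ℝ E] {K : Submodule ℝ E} [K.HasOrthogonalProjection] {S : Finset E}
    {α β x y : E} {c : ℝ} (hx : x ∈ K) (hxS : IsRegularVector S x) (hβ : β ∈ S)
    (hP : (K.orthogonalProjectionOnto α : E) = c • β) (hy : α ∈ Kᗮ → ⟪α, y⟫ ≠ 0) :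
    ⟪α, x⟫ ≠ 0 ∨ ⟪α, y⟫ ≠ 0 := by
  rcases eq_or_ne c 0 with rfl | hc
  · rw [zero_smul, ZeroMemClass.coe_eq_zero, Submodule.orthogonalProjectionOnto_eq_zero_iff] at hP
    exact Or.inr (hy hP)
  · left
    have hPx := K.inner_orthogonalProjectionOnto_eq_of_mem_right ⟨x, hx⟩ α
    rw [Submodule.coe_inner, hP] at hPx
    rw [← hPx, real_inner_smul_left]
    exact mul_ne_zero hc (hxS β hβ)

theorem fixedSet_eq_regularPart {n : ℕ}
    {σ : EuclideanSpace ℝ (Fin n) ≃ₗᵢ[ℝ] EuclideanSpace ℝ (Fin n)} (hσ : σ * σ = 1)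
    {R R₁ R₂ : Finset (EuclideanSpace ℝ (Fin n))}
    (hR₁ : ∀ β, β ∈ R₁ ↔ β ∈ R ∧ β ∈ minusEigenspace σ)
    (hR₂ : ∀ β, β ∈ R₂ ↔ β ∈ R ∧ β ∈ plusEigenspace σ)
    (hspecial : ∀ α ∈ R,
      (∃ c : ℝ, ∃ β ∈ R₁, (Submodule.orthogonalProjectionOnto (minusEigenspace σ) α
        : EuclideanSpace ℝ (Fin n)) = c • β) ∨
      (∃ c : ℝ, ∃ β ∈ R₂, (Submodule.orthogonalProjectionOnto (plusEigenspace σ) α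
        : EuclideanSpace ℝ (Fin n)) = c • β)) :
    {z | (∀ α ∈ R, ∑ i, (α i : ℂ) * z i ≠ 0) ∧ barAction σ z = z} =
      regularPart (plusEigenspace σ) (minusEigenspace σ) R₂ R₁ := by
  have hplus := plusEigenspace_eq_orthogonal hσ
  have hminus := minusEigenspace_eq_orthogonal hσ
  ext z
  simp only [Set.mem_ofPred_eq, mem_regularPart_iff, barAction_eq_self_iff,
    ← mem_plusEigenspace_iff, ← mem_minusEigenspace_iff, ne_eq, sum_mul_eq_zero_iff, not_and_or]
  constructor
  · rintro ⟨hroot, hre, him⟩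
    refine ⟨hre, him, fun β hβ => ?_, fun β hβ => ?_⟩
    · rw [hR₂] at hβ
      have : ⟪β, imVec z⟫ = 0 := (Submodule.mem_orthogonal _ _).1 (hminus ▸ him) β hβ.2
      exact (hroot β hβ.1).resolve_right (not_not.2 this)
    · rw [hR₁] at hβ
      have : ⟪β, reVec z⟫ = 0 := (Submodule.mem_orthogonal _ _).1 (hplus ▸ hre) β hβ.2
      exact (hroot β hβ.1).resolve_left (not_not.2 this)
  · rintro ⟨hre, him, hS₂, hS₁⟩
    refine ⟨fun α hα => ?_, hre, him⟩
    rcases hspecial α hα with ⟨c, β, hβ, hP⟩ | ⟨c, β, hβ, hP⟩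
    · exact (inner_ne_zero_or_of_orthogonalProjection_eq_smul him hS₁ hβ hP fun hα' =>
        hS₂ α ((hR₂ α).2 ⟨hα, hplus ▸ hα'⟩)).symm
    · exact inner_ne_zero_or_of_orthogonalProjection_eq_smul hre hS₂ hβ hP fun hα' =>
        hS₁ α ((hR₁ α).2 ⟨hα, hminus ▸ hα'⟩)

theorem stmt13_general {n : ℕ}
    (R : Finset (EuclideanSpace ℝ (Fin n))) (hR0 : ∀ α ∈ R, α ≠ 0)
    (G : Subgroup (EuclideanSpace ℝ (Fin n) ≃ₗᵢ[ℝ] EuclideanSpace ℝ (Fin n))) [Finite G]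
    (hGgen : G = Subgroup.closure
      {g | ∃ α ∈ R, g = Submodule.reflection (ℝ ∙ α)ᗮ})
    (hstab : ∀ g ∈ G, ∀ α ∈ R, g α ∈ R)
    (σ : EuclideanSpace ℝ (Fin n) ≃ₗᵢ[ℝ] EuclideanSpace ℝ (Fin n))
    (hσ2 : σ * σ = 1)
    (R₁ R₂ : Finset (EuclideanSpace ℝ (Fin n)))
    (hR₁ : (R₁ : Set (EuclideanSpace ℝ (Fin n)))
      = {α | α ∈ R ∧ α ∈ minusEigenspace σ})
    (hR₂ : (R₂ : Set (EuclideanSpace ℝ (Fin n)))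
      = {α | α ∈ R ∧ α ∈ plusEigenspace σ})
    (G₁ G₂ : Subgroup (EuclideanSpace ℝ (Fin n) ≃ₗᵢ[ℝ] EuclideanSpace ℝ (Fin n)))
    (hG₁ : G₁ = Subgroup.closure {g | ∃ α ∈ R₁, g = Submodule.reflection (ℝ ∙ α)ᗮ})
    (hG₂ : G₂ = Subgroup.closure {g | ∃ α ∈ R₂, g = Submodule.reflection (ℝ ∙ α)ᗮ})
    (hspecial : ∀ α ∈ R,
      (∃ c : ℝ, ∃ β ∈ R₁, (Submodule.orthogonalProjectionOnto (minusEigenspace σ) α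
        : EuclideanSpace ℝ (Fin n)) = c • β) ∨
      (∃ c : ℝ, ∃ β ∈ R₂, (Submodule.orthogonalProjectionOnto (plusEigenspace σ) α
        : EuclideanSpace ℝ (Fin n)) = c • β))
    (F : Set (Fin n → ℂ))
    (hF : F = {z | (∀ α ∈ R, (∑ i, (α i : ℂ) * z i) ≠ 0) ∧ barAction σ z = z}) :
    Nat.card (ConnectedComponents F) = Nat.card G₁ * Nat.card G₂ ∧
      ∀ z ∈ F, ContractibleSpace (connectedComponentIn F z) := by
  have hmem₁ : ∀ β, β ∈ R₁ ↔ β ∈ R ∧ β ∈ minusEigenspace σ := Set.ext_iff.1 hR₁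
  have hmem₂ : ∀ β, β ∈ R₂ ↔ β ∈ R ∧ β ∈ plusEigenspace σ := Set.ext_iff.1 hR₂
  have hsub₁ : ∀ β ∈ R₁, β ∈ R ∧ β ∈ minusEigenspace σ := fun β => (hmem₁ β).1
  have hsub₂ : ∀ β ∈ R₂, β ∈ R ∧ β ∈ plusEigenspace σ := fun β => (hmem₂ β).1
  have hR : IsReflectionClosed R := fun α hα =>
    hstab _ (hGgen ▸ rootReflection_mem_reflectionGroup hα)
  have hfin {S : Finset _} (hS : S ⊆ R) : Finite (reflectionGroup S) :=
    Finite.Set.subset (G : Set _) (hGgen ▸ reflectionGroup_mono hS)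
  have := hfin fun β hβ => (hsub₁ β hβ).1
  have := hfin fun β hβ => (hsub₂ β hβ).1
  subst hG₁ hG₂ hF
  rw [fixedSet_eq_regularPart hσ2 hmem₁ hmem₂ hspecial]
  refine ⟨?_, fun z hz => contractibleSpace_connectedComponentIn_regularPart hz⟩
  rw [card_connectedComponents_regularPart (fun β hβ => (hsub₂ β hβ).2)
    (fun β hβ => (hsub₁ β hβ).2) (fun β hβ => hR0 β (hsub₂ β hβ).1)
    (fun β hβ => hR0 β (hsub₁ β hβ).1) (hR.of_mem_iff hmem₂) (hR.of_mem_iff hmem₁), mul_comm]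
  rfl

/-- let `σ` be a *special* involution in a finite Coxeter group `G`
(hypothesis `hspecial`: every root of `R` has a projection onto `V₁` or `V₂`
proportional to a root of `R₁ = R ∩ V₁` or of `R₂ = R ∩ V₂`), with `G₁`, `G₂`
the Coxeter subgroups generated by the reflections in `R₁`, `R₂`.  Then the
fixed point set of `z ↦ σ(z̄)` on the hyperplane complement `M_G` has exactly
`|G₁|·|G₂|` connected components, each of which is contractible. -/
theorem stmt13 {n : ℕ}
    (R : Finset (EuclideanSpace ℝ (Fin n))) (hR0 : ∀ α ∈ R, α ≠ 0)
    (G : Subgroup (EuclideanSpace ℝ (Fin n) ≃ₗᵢ[ℝ] EuclideanSpace ℝ (Fin n))) [Finite G]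
    (hGgen : G = Subgroup.closure
      {g | ∃ α ∈ R, g = Submodule.reflection (ℝ ∙ α)ᗮ})
    (hstab : ∀ g ∈ G, ∀ α ∈ R, g α ∈ R)
    (σ : EuclideanSpace ℝ (Fin n) ≃ₗᵢ[ℝ] EuclideanSpace ℝ (Fin n))
    (hσG : σ ∈ G) (hσ2 : σ * σ = 1)
    (R₁ R₂ : Finset (EuclideanSpace ℝ (Fin n)))
    (hR₁ : (R₁ : Set (EuclideanSpace ℝ (Fin n)))
      = {α | α ∈ R ∧ α ∈ minusEigenspace σ})
    (hR₂ : (R₂ : Set (EuclideanSpace ℝ (Fin n)))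
      = {α | α ∈ R ∧ α ∈ plusEigenspace σ})
    (G₁ G₂ : Subgroup (EuclideanSpace ℝ (Fin n) ≃ₗᵢ[ℝ] EuclideanSpace ℝ (Fin n)))
    (hG₁ : G₁ = Subgroup.closure {g | ∃ α ∈ R₁, g = Submodule.reflection (ℝ ∙ α)ᗮ})
    (hG₂ : G₂ = Subgroup.closure {g | ∃ α ∈ R₂, g = Submodule.reflection (ℝ ∙ α)ᗮ})
    (hspecial : ∀ α ∈ R,
      (∃ c : ℝ, ∃ β ∈ R₁, (Submodule.orthogonalProjectionOnto (minusEigenspace σ) α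
        : EuclideanSpace ℝ (Fin n)) = c • β) ∨
      (∃ c : ℝ, ∃ β ∈ R₂, (Submodule.orthogonalProjectionOnto (plusEigenspace σ) α
        : EuclideanSpace ℝ (Fin n)) = c • β))
    (F : Set (Fin n → ℂ))
    (hF : F = {z | (∀ α ∈ R, (∑ i, (α i : ℂ) * z i) ≠ 0) ∧ barAction σ z = z}) :
    Nat.card (ConnectedComponents F) = Nat.card G₁ * Nat.card G₂ ∧
      ∀ z ∈ F, ContractibleSpace (connectedComponentIn F z) :=
  stmt13_general R hR0 G hGgen hstab σ hσ2 R₁ R₂ hR₁ hR₂ G₁ G₂ hG₁ hG₂ hspecial F hF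
end
end
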